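/- arXiv:2510.04461 — 3 statements merged into one kernel-verified Lean document; each statement's English description precedes it below -/
import Mathlib

section
/- Let G be a connected graph with the property that for every edge {u,v} of G, at least one of P_u(v) or P_v(u) is empty, where P_v(u) = { w ∈ N_G(u) \ {v} : w ∉ N_G(v) }. Then G has a universal vertex, i.e., a vertex adjacent to all other vertices of G. -/
/-- `kelmansP G u v = P_v(u)`: the neighbors of `u` other than `v` that are
not neighbors of `v`. -/
def kelmansP {V : Type*} (G : SimpleGraph V) (u v : V) : Set V :=
  {w | G.Adj u w ∧ w ≠ v ∧ ¬ G.Adj v w}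

/-- If in a finite connected graph every edge {u,v} has P_u(v) = ∅ or
P_v(u) = ∅, then the graph has a universal vertex. -/
theorem exists_universal_vertex_of_shifted {V : Type*} [Fintype V] [Nonempty V]
    (G : SimpleGraph V) (hconn : G.Connected)
    (h : ∀ u v : V, G.Adj u v → kelmansP G v u = ∅ ∨ kelmansP G u v = ∅) :
    ∃ i : V, ∀ j : V, j ≠ i → G.Adj i j := by
  classical
  obtain ⟨v, -, hv⟩ := Finset.exists_max_image Finset.univ (fun x => G.degree x)
    ⟨Classical.arbitrary V, Finset.mem_univ _⟩
  have key : ∀ x y, (x = v ∨ G.Adj v x) → G.Adj x y → (y = v ∨ G.Adj v y) := by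
    rintro x y (rfl | hx) hxy
    · exact Or.inr hxy
    · by_cases hyv : y = v
      · exact Or.inl hyv
      right
      rcases h v x hx with h1 | h2
      · -- h1 : kelmansP G x v = ∅, i.e. no neighbor of x (≠ v) avoids v
        by_contra hvy
        have : y ∈ kelmansP G x v := ⟨hxy, hyv, hvy⟩
        rw [h1] at this
        exact this
      · -- h2 : kelmansP G v x = ∅, i.e. N(v)\{x} ⊆ N(x)\{v}
        have hsub : G.neighborFinset v \ {x} ⊆ G.neighborFinset x \ {v} := by
          intro w hw
          simp only [Finset.mem_sdiff, Finset.mem_singleton,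
            SimpleGraph.mem_neighborFinset] at hw ⊢
          refine ⟨?_, fun hwv => (hwv ▸ hw.1).ne rfl⟩
          by_contra hxw
          have : w ∈ kelmansP G v x := ⟨hw.1, hw.2, hxw⟩
          rw [h2] at this
          exact this
        have hxv : x ∈ G.neighborFinset v := by
          rw [SimpleGraph.mem_neighborFinset]; exact hx
        have hvx : v ∈ G.neighborFinset x := by
          rw [SimpleGraph.mem_neighborFinset]; exact hx.symm
        have hc1 : (G.neighborFinset v \ {x}).card = G.degree v - 1 := by
          rw [Finset.sdiff_singleton_eq_erase, Finset.card_erase_of_mem hxv]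
          rfl
        have hc2 : (G.neighborFinset x \ {v}).card = G.degree x - 1 := by
          rw [Finset.sdiff_singleton_eq_erase, Finset.card_erase_of_mem hvx]
          rfl
        have hdx : G.degree x ≤ G.degree v := hv x (Finset.mem_univ x)
        have hcard : (G.neighborFinset x \ {v}).card ≤ (G.neighborFinset v \ {x}).card := by
          rw [hc1, hc2]; omega
        have heq := Finset.eq_of_subset_of_card_le hsub hcard
        have hy : y ∈ G.neighborFinset x \ {v} := by
          simp only [Finset.mem_sdiff, Finset.mem_singleton,
            SimpleGraph.mem_neighborFinset]
          exact ⟨hxy, hyv⟩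
        rw [← heq] at hy
        simp only [Finset.mem_sdiff, SimpleGraph.mem_neighborFinset] at hy
        exact hy.1
  have step : ∀ a b, G.Walk a b → (a = v ∨ G.Adj v a) → (b = v ∨ G.Adj v b) := by
    intro a b p
    induction p with
    | nil => exact id
    | cons h' p ih => exact fun ha => ih (key _ _ ha h')
  refine ⟨v, fun j hj => ?_⟩
  obtain ⟨p⟩ := hconn v j
  rcases step v j p (Or.inl rfl) with rfl | hadj
  · exact absurd rfl hj
  · exact hadj
end

section
/- For k even with s = (k−2)/2 ≥ 1 and n ≥ s + 2, the graph S_{n,s}^+ = K_s ∨ (K_2 ∪ I_{n−s−2}) on n vertices contains no cycle of length at least k. -/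
/-- The graph `S_{n,a,b} = K_a ∨ (K_b ∪ I_{n-a-b})` on `n` vertices: the first
`a` vertices form a clique joined to everything, the next `b` vertices form a
clique, and the remaining `n-a-b` vertices are independent. -/
def Snab (n a b : ℕ) : SimpleGraph (Fin n) where
  Adj x y := x ≠ y ∧
    ((x : ℕ) < a ∨ (y : ℕ) < a ∨ ((x : ℕ) < a + b ∧ (y : ℕ) < a + b))
  symm := by
    constructor
    intro x y ⟨h1, h2⟩
    exact ⟨h1.symm, by tauto⟩
  loopless := by
    constructor
    intro x ⟨h1, _⟩
    exact h1 rfl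

/-- The circumference of a graph: the length of a longest cycle
(`0` if there is no cycle). -/
noncomputable def circumference {V : Type*} (G : SimpleGraph V) : ℕ :=
  sSup {n | ∃ (u : V) (c : G.Walk u u), c.IsCycle ∧ c.length = n}

/-- The number of vertices of a longest path of `G`. -/
noncomputable def longestPathVerts {V : Type*} (G : SimpleGraph V) : ℕ :=
  sSup {n | ∃ (u v : V) (p : G.Walk u v), p.IsPath ∧ p.length + 1 = n}

/-!
Every edge of `S_{n,s}^+` except the edge of the `K_2` has an endpoint in the `K_s`.
A cycle passes through each vertex at most once, hence enters and leaves each of the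
`s` clique vertices at most once, so it has at most `2s` edges meeting `K_s`, plus
possibly the `K_2` edge: its length is at most `2s + 1 < k`.
-/

open Finset

namespace SimpleGraph.Walk

variable {V : Type*} {G : SimpleGraph V} {u : V}

theorem IsCycle.injOn_snd_darts {c : G.Walk u u} (hc : c.IsCycle) :
    Set.InjOn (fun d : G.Dart ↦ d.snd) {d | d ∈ c.darts} :=
  fun _ hx _ hy ↦ List.inj_on_of_nodup_map (by rw [map_snd_darts]; exact hc.support_nodup) hx hy

theorem IsCycle.injOn_fst_darts {c : G.Walk u u} (hc : c.IsCycle) :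
    Set.InjOn (fun d : G.Dart ↦ d.fst) {d | d ∈ c.darts} := by
  intro x hx y hy hxy
  have := hc.reverse.injOn_snd_darts (x₁ := x.symm) (x₂ := y.symm)
    (by simpa using hx) (by simpa using hy) hxy
  exact Dart.symm_involutive.injective (by simpa using this)

theorem IsTrail.injOn_edge_darts {v : V} {p : G.Walk u v} (hp : p.IsTrail) :
    Set.InjOn Dart.edge {d | d ∈ p.darts} :=
  fun _ hx _ hy ↦ List.inj_on_of_nodup_map hp.edges_nodup hx hy

theorem IsCycle.length_le_of_adj_cover {c : G.Walk u u} (hc : c.IsCycle) (S : Finset V)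
    (F : Finset (Sym2 V)) (hcover : ∀ ⦃x y⦄, G.Adj x y → x ∈ S ∨ y ∈ S ∨ s(x, y) ∈ F) :
    c.length ≤ 2 * #S + #F := by
  classical
  set D := c.darts.toFinset
  have hD : #D = c.length := by
    rw [List.toFinset_card_of_nodup (hc.edges_nodup.of_map _), length_darts]
  have hsub : D ⊆ {d ∈ D | d.fst ∈ S} ∪ {d ∈ D | d.snd ∈ S} ∪ {d ∈ D | d.edge ∈ F} := by
    intro d hd
    have := hcover d.adj
    simp only [mem_union, mem_filter]
    tauto
  have hfst : #{d ∈ D | d.fst ∈ S} ≤ #S :=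
    card_le_card_of_injOn _ (fun d hd ↦ (mem_filter.1 hd).2)
      (hc.injOn_fst_darts.mono fun d hd ↦ List.mem_toFinset.1 (mem_filter.1 hd).1)
  have hsnd : #{d ∈ D | d.snd ∈ S} ≤ #S :=
    card_le_card_of_injOn _ (fun d hd ↦ (mem_filter.1 hd).2)
      (hc.injOn_snd_darts.mono fun d hd ↦ List.mem_toFinset.1 (mem_filter.1 hd).1)
  have hedge : #{d ∈ D | d.edge ∈ F} ≤ #F :=
    card_le_card_of_injOn _ (fun d hd ↦ (mem_filter.1 hd).2)
      (hc.isTrail.injOn_edge_darts.mono fun d hd ↦ List.mem_toFinset.1 (mem_filter.1 hd).1)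
  calc c.length = #D := hD.symm
    _ ≤ #{d ∈ D | d.fst ∈ S} + #{d ∈ D | d.snd ∈ S} + #{d ∈ D | d.edge ∈ F} :=
      (card_le_card hsub).trans <| (card_union_le _ _).trans <| by gcongr; exact card_union_le _ _
    _ ≤ 2 * #S + #F := by omega

end SimpleGraph.Walk

theorem Snab_two_adj_cover {n a : ℕ} (ha : a + 2 ≤ n) ⦃x y : Fin n⦄ (h : (Snab n a 2).Adj x y) :
    x ∈ ({v | (v : ℕ) < a} : Finset (Fin n)) ∨ y ∈ ({v | (v : ℕ) < a} : Finset (Fin n)) ∨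
      s(x, y) ∈ ({s(⟨a, by omega⟩, ⟨a + 1, by omega⟩)} : Finset (Sym2 (Fin n))) := by
  obtain ⟨hne, h⟩ := h
  simp only [mem_filter, mem_univ, true_and, mem_singleton, Sym2.eq_iff, Fin.ext_iff]
  have := Fin.val_injective.ne hne
  omega

theorem Snab_two_cycle_length_le {n a : ℕ} (ha : a + 2 ≤ n) {u : Fin n}
    {c : (Snab n a 2).Walk u u} (hc : c.IsCycle) : c.length ≤ 2 * a + 1 := by
  have := hc.length_le_of_adj_cover _ _ (Snab_two_adj_cover ha)
  rwa [Fin.card_filter_val_lt, card_singleton, min_eq_right (by omega)] at this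

theorem Snsplus_no_long_cycle_general (n s k : ℕ) (hk : k = 2 * s + 2)
    (hn : s + 2 ≤ n) :
    ∀ (u : Fin n) (c : (Snab n s 2).Walk u u), c.IsCycle → c.length < k := by
  intro u c hc
  have := Snab_two_cycle_length_le hn hc
  omega

/-- For even `k = 2s + 2` with `s >= 1` and `n >= s + 2`, the graph
`S_{n,s}^+` (the join of `K_s` with the disjoint union of `K_2` and
`I_{n-s-2}`) has no cycle of length at least `k`. -/
theorem Snsplus_no_long_cycle (n s k : ℕ) (hs : 1 ≤ s) (hk : k = 2 * s + 2)
    (hn : s + 2 ≤ n) :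
    ∀ (u : Fin n) (c : (Snab n s 2).Walk u u), c.IsCycle → c.length < k :=
  Snsplus_no_long_cycle_general n s k hk hn
end

section
/- Let a ≥ 1, b ≥ 1, and n ≥ a + b + a. The number of vertices in a longest path of S_{n,a,b} = K_a ∨ (K_b ∪ I_{n−a−b}) equals 2a + b. -/
open Function

namespace SimpleGraph.Walk

variable {V : Type*} {G : SimpleGraph V}

/-- `min 1 (countP …)` is the indicator that `p` meets a vertex outside `A ∪ I`. The correction
`if A u then 0 else 1` at the first vertex `u` is what makes the induction go through. -/
theorem countP_support_le_of_adj_imp (A I : V → Prop) [DecidablePred A] [DecidablePred I]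
    (hI : ∀ x y, I x → G.Adj x y → A y) {u v : V} (p : G.Walk u v) :
    p.support.countP (I ·) + min 1 (p.support.countP fun x => ¬A x ∧ ¬I x) ≤
      p.support.countP (A ·) + if A u then 0 else 1 := by
  induction p with
  | @nil x => by_cases A x <;> by_cases I x <;> simp_all
  | @cons u v w h p ih =>
    simp only [support_cons, List.countP_cons, decide_eq_true_eq]
    by_cases hIu : I u
    · have hAv : A v := hI u v hIu h
      simp only [hAv, hIu, not_true_eq_false, and_false, if_true, if_false] at ih ⊢
      split_ifs <;> omega
    by_cases hAu : A u
    · simp only [hAu, hIu, not_true_eq_false, false_and, if_true, if_false] at ih ⊢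
      split_ifs at ih <;> omega
    · have hIv : ¬I v := fun hIv => hAu (hI v u hIv h.symm)
      simp only [hAu, hIu, not_false_eq_true, and_self, if_true, if_false] at ih ⊢
      by_cases hAv : A v
      · simp only [hAv, if_true] at ih
        omega
      · have hBv : 0 < p.support.countP fun x => ¬A x ∧ ¬I x :=
          List.countP_pos_iff.2 ⟨v, p.start_mem_support, by simp [hAv, hIv]⟩
        simp only [hAv, if_false] at ih
        omega

theorem exists_isPath_of_nodup_of_isChain {l : List V} (hne : l ≠ []) (hl : l.Nodup)
    (hc : l.IsChain G.Adj) : ∃ (u v : V) (p : G.Walk u v), p.IsPath ∧ p.length + 1 = l.length :=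
  ⟨_, _, ofSupport l hne hc, by rw [isPath_def, support_ofSupport]; exact hl, by
    rw [length_ofSupport]; have := List.length_pos_iff.2 hne; omega⟩

end SimpleGraph.Walk

theorem List.Nodup.countP_le_of_mem_Ico {n lo hi : ℕ} {l : List (Fin n)} (hl : l.Nodup)
    (P : Fin n → Prop) [DecidablePred P] (hP : ∀ x, P x → lo ≤ (x : ℕ) ∧ (x : ℕ) < hi) :
    l.countP (P ·) ≤ hi - lo := by
  rw [← hl.card_eq_countP, ← Nat.card_Ico lo hi]
  refine Finset.card_le_card_of_injOn Fin.val (fun x hx => ?_) Fin.val_injective.injOn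
  simpa using hP x (Finset.mem_filter.1 hx).2

theorem List.length_le_countP_add_countP_add_countP {α : Type*} (l : List α) (A I : α → Prop)
    [DecidablePred A] [DecidablePred I] :
    l.length ≤ l.countP (A ·) + (l.countP fun x => ¬A x ∧ ¬I x) + l.countP (I ·) := by
  induction l with
  | nil => simp
  | cons x l ih =>
    simp only [List.length_cons, List.countP_cons, decide_eq_true_eq]
    split_ifs <;> first | omega | tauto

namespace Snab

theorem length_support_le_of_isPath {n a b : ℕ} (hb : 1 ≤ b) {u v : Fin n}
    (p : (Snab n a b).Walk u v) (hp : p.IsPath) : p.support.length ≤ 2 * a + b := by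
  have hI : ∀ x y : Fin n, a + b ≤ (x : ℕ) → (Snab n a b).Adj x y → (y : ℕ) < a := by
    rintro x y hx ⟨-, hxy⟩
    omega
  have key := p.countP_support_le_of_adj_imp _ _ hI
  have hA := hp.support_nodup.countP_le_of_mem_Ico (lo := 0) (fun x : Fin n => (x : ℕ) < a)
    fun x hx => ⟨x.val.zero_le, hx⟩
  have hB := hp.support_nodup.countP_le_of_mem_Ico (lo := a) (hi := a + b)
    (fun x : Fin n => ¬(x : ℕ) < a ∧ ¬a + b ≤ (x : ℕ)) fun x hx => by omega
  have hlen := p.support.length_le_countP_add_countP_add_countP (fun x : Fin n => (x : ℕ) < a)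
    (fun x => a + b ≤ (x : ℕ))
  split_ifs at key <;> omega

/-- Position `i` of the path `I₀ A₀ I₁ A₁ ⋯ I_{a-1} A_{a-1} B₀ ⋯ B_{b-1}`, where `A_j = j`,
`B_j = a + j` and `I_j = a + b + j` in `Snab n a b`. -/
def pathVertex (a b i : ℕ) : ℕ :=
  if i < 2 * a then (if i % 2 = 0 then a + b + i / 2 else i / 2) else i - a

theorem exists_isPath_length {n a b : ℕ} (hb : 1 ≤ b) (hn : a + b + a ≤ n) :
    ∃ (u v : Fin n) (p : (Snab n a b).Walk u v), p.IsPath ∧ p.length + 1 = 2 * a + b := by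
  let f : Fin (2 * a + b) → Fin n :=
    fun i => ⟨pathVertex a b i, by unfold pathVertex; split_ifs <;> omega⟩
  have hf : Injective f := by
    intro i j h
    simp only [f, Fin.mk.injEq, pathVertex] at h
    ext
    split_ifs at h <;> omega
  have hchain : (List.ofFn f).IsChain (Snab n a b).Adj := by
    refine List.isChain_ofFn.2 fun i hi => ⟨hf.ne (by simp), ?_⟩
    simp only [f, pathVertex]
    split_ifs <;> omega
  simpa using SimpleGraph.Walk.exists_isPath_of_nodup_of_isChain
    (by simp only [ne_eq, List.ofFn_eq_nil_iff]; omega) (List.nodup_ofFn.2 hf) hchain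

end Snab

theorem longestPath_Snab_general (n a b : ℕ) (hb : 1 ≤ b)
    (hn : a + b + a ≤ n) : longestPathVerts (Snab n a b) = 2 * a + b := by
  refine IsGreatest.csSup_eq ⟨Snab.exists_isPath_length hb hn, ?_⟩
  rintro m ⟨u, v, p, hp, rfl⟩
  have := Snab.length_support_le_of_isPath hb p hp
  rw [p.length_support] at this
  omega

/-- For `a >= 1`, `b >= 1` and `n >= 2a + b`, the longest path of
`S_{n,a,b}` has exactly `2a + b` vertices. -/
theorem longestPath_Snab (n a b : ℕ) (ha : 1 ≤ a) (hb : 1 ≤ b)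
    (hn : a + b + a ≤ n) : longestPathVerts (Snab n a b) = 2 * a + b :=
  longestPath_Snab_general n a b hb hn
end
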